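/- For $m \geq 3$ odd, the Gromov–Hausdorff distance between the vertex set $P_2$ of a regular 2-gon (two antipodal points at distance $\pi$) and the vertex set $P_m$ of a regular $m$-gon, both inscribed in the unit circle with the geodesic metric, equals $\frac{\pi}{2} - \frac{\pi}{2m}$. -/

import Mathlib

open Real

/-- Vertex set of the regular `n`-gon inscribed in the unit circle, modeled inside
`AddCircle (2π)` whose quotient metric is exactly the geodesic metric
`d(α,β) = min (|α-β|) (2π - |α-β|)`. -/
noncomputable def Pvert (n : ℕ) : Set (AddCircle (2 * π)) :=
  Set.range fun j : Fin n => ((2 * π * j / n : ℝ) : AddCircle (2 * π))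

instance (n : ℕ) : Finite (Pvert n) := by unfold Pvert; exact (Set.finite_range _).to_subtype


instance (n : ℕ) [NeZero n] : Nonempty (Pvert n) := by
  unfold Pvert; exact ⟨⟨_, Set.mem_range_self (0 : Fin n)⟩⟩

/-! The map `P_m → P_2` sending the vertex `0` to `0` and every other vertex to `π` has
distortion at most `π - π/m`, the diameter of `P_m`, because distinct vertices of `P_m` are at
least `2π/m` apart; this gives `d_GH ≤ (π - π/m)/2`.

Conversely, a Gromov–Hausdorff coupling yields a map `f : P_m → P_2` of distortion at most
`2 d_GH`. Rotation by `(m - 1)/2` steps moves every vertex of `P_m` by exactly `π - π/m`, and a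
permutation of a set of odd size cannot swap the two colours of every `2`-colouring, so some
vertex and its rotate have the same image under `f`. Hence `π - π/m ≤ 2 d_GH`. -/

open Metric

namespace GromovHausdorff

variable {X Y : Type*} [MetricSpace X] [CompactSpace X] [Nonempty X]
  [MetricSpace Y] [CompactSpace Y] [Nonempty Y]

theorem ghDist_le_of_surjective {f : X → Y} (hf : Function.Surjective f) {ε : ℝ}
    (H : ∀ x x', |dist (f x) (f x') - dist x x'| ≤ ε) : ghDist X Y ≤ ε / 2 := by
  have := ghDist_le_of_approx_subsets (s := Set.univ) (fun x => f x) (ε₁ := 0) (ε₃ := 0)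
    (fun x => ⟨x, Set.mem_univ x, (dist_self x).le⟩)
    (fun y => ⟨⟨(hf y).choose, Set.mem_univ _⟩, by rw [(hf y).choose_spec, dist_self]⟩)
    (fun x x' => by rw [abs_sub_comm]; exact H x x')
  linarith

theorem exists_abs_dist_sub_le_two_mul_ghDist :
    ∃ f : Y → X, ∀ y y', |dist (f y) (f y') - dist y y'| ≤ 2 * ghDist X Y := by
  set Φ := optimalGHInjl X Y
  set Ψ := optimalGHInjr X Y
  have hclose : ∀ y, ∃ x, dist (Φ x) (Ψ y) ≤ ghDist X Y := by
    intro y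
    obtain ⟨_, ⟨x, rfl⟩, hx⟩ := (isCompact_range (isometry_optimalGHInjl X Y).continuous
      ).exists_infDist_eq_dist (Set.range_nonempty Φ) (Ψ y)
    refine ⟨x, ?_⟩
    rw [dist_comm, ← hx, ← hausdorffDist_optimal, hausdorffDist_comm]
    exact infDist_le_hausdorffDist_of_mem (Set.mem_range_self y)
      (hausdorffEDist_ne_top_of_nonempty_of_bounded (Set.range_nonempty _)
        (Set.range_nonempty _) isBounded_of_compactSpace isBounded_of_compactSpace)
  choose f hf using hclose
  refine ⟨f, fun y y' => ?_⟩
  rw [← (isometry_optimalGHInjl X Y).dist_eq, ← (isometry_optimalGHInjr X Y).dist_eq]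
  calc |dist (Φ (f y)) (Φ (f y')) - dist (Ψ y) (Ψ y')|
      ≤ dist (Φ (f y)) (Ψ y) + dist (Φ (f y')) (Ψ y') := dist_dist_dist_le _ _ _ _
    _ ≤ 2 * ghDist X Y := by linarith [hf y, hf y']

end GromovHausdorff

theorem Fintype.exists_apply_perm_eq_of_odd_card {α : Type*} [Fintype α]
    (hα : Odd (Fintype.card α)) (σ : Equiv.Perm α) (c : α → Bool) : ∃ a, c (σ a) = c a := by
  by_contra! h
  have hflip : ∀ a, c (σ a) = !c a := fun a => Bool.eq_not_iff.mpr (h a)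
  have hcount : ∑ a, (if c a then 1 else 0 : ℕ) = ∑ a, (if c a then 0 else 1) := by
    rw [← Equiv.sum_comp σ]
    simp only [hflip]
    exact Finset.sum_congr rfl fun a _ => by cases c a <;> rfl
  have htotal : ∑ a, ((if c a then 1 else 0 : ℕ) + (if c a then 0 else 1)) = Fintype.card α := by
    rw [← Finset.card_univ, Finset.card_eq_sum_ones]
    exact Finset.sum_congr rfl fun a _ => by cases c a <;> rfl
  rw [Finset.sum_add_distrib, ← hcount] at htotal
  exact (Nat.not_even_iff_odd.mpr hα) ⟨_, htotal.symm⟩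

instance : Fact (0 < 2 * π) := ⟨two_pi_pos⟩

theorem Pvert_two : Pvert 2 = {0, ((π : ℝ) : AddCircle (2 * π))} := by
  ext x
  simp [Pvert, Fin.exists_fin_two, eq_comm]

namespace Pvert

theorem dist_zero_pi : dist (0 : AddCircle (2 * π)) (π : ℝ) = π := by
  have hhalf := AddCircle.norm_half_period_eq (2 * π)
  rw [mul_div_cancel_left₀ π two_ne_zero, abs_of_pos two_pi_pos,
    mul_div_cancel_left₀ π two_ne_zero] at hhalf
  rw [dist_comm, dist_eq_norm, sub_zero, hhalf]

theorem coe_pi_ne_zero : ((π : ℝ) : AddCircle (2 * π)) ≠ 0 := fun h => by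
  have := dist_zero_pi
  rw [h, dist_self] at this
  exact pi_ne_zero this.symm

theorem coe_eq_zero_or_eq_pi (a : Pvert 2) :
    (a : AddCircle (2 * π)) = 0 ∨ (a : AddCircle (2 * π)) = (π : ℝ) := by
  simpa [Pvert_two] using a.2

theorem eq_of_coe_eq_zero_iff {a b : Pvert 2}
    (h : (a : AddCircle (2 * π)) = 0 ↔ (b : AddCircle (2 * π)) = 0) : a = b := by
  ext
  rcases coe_eq_zero_or_eq_pi a with ha | ha <;> rcases coe_eq_zero_or_eq_pi b with hb | hb <;>
    simp only [ha, hb, coe_pi_ne_zero, iff_true, iff_false, not_true_eq_false] at h ⊢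

theorem dist_eq_pi_of_ne {a b : Pvert 2} (h : a ≠ b) : dist a b = π := by
  rw [Subtype.dist_eq]
  rcases coe_eq_zero_or_eq_pi a with ha | ha <;> rcases coe_eq_zero_or_eq_pi b with hb | hb
  · exact absurd (Subtype.ext (ha.trans hb.symm)) h
  · rw [ha, hb, dist_zero_pi]
  · rw [ha, hb, dist_comm, dist_zero_pi]
  · exact absurd (Subtype.ext (ha.trans hb.symm)) h

variable {n : ℕ} [NeZero n]

/-- The vertex `e^{2πiz/n}`; indexing by `ZMod n` turns rotations of `P_n` into addition. -/
noncomputable def vertex (n : ℕ) [NeZero n] : ZMod n →+ AddCircle (2 * π) :=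
  (AddCircle.equivAddCircle 1 (2 * π) one_ne_zero two_pi_pos.ne').toAddMonoidHom.comp
    ZMod.toAddCircle

theorem vertex_natCast (k : ℕ) :
    vertex n k = ((k / n * (2 * π) : ℝ) : AddCircle (2 * π)) := by
  simp [vertex, ZMod.toAddCircle_natCast]

theorem norm_vertex (z : ZMod n) : ‖vertex n z‖ = 2 * π * z.valMinAbs.natAbs / n := by
  rw [← ZMod.natCast_zmod_val z, vertex_natCast, AddCircle.norm_div_natCast,
    Nat.mod_eq_of_lt z.val_lt, ← ZMod.valMinAbs_natAbs_eq_min, ZMod.natCast_zmod_val,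
    mul_div_assoc]

theorem vertex_eq_zero_iff {z : ZMod n} : vertex n z = 0 ↔ z = 0 := by
  rw [← norm_eq_zero, norm_vertex]
  simp [two_pi_pos.ne', NeZero.ne, ZMod.valMinAbs_eq_zero]

theorem range_vertex : Set.range (vertex n) = Pvert n := by
  ext x
  constructor
  · rintro ⟨z, rfl⟩
    refine ⟨⟨z.val, z.val_lt⟩, ?_⟩
    show ((2 * π * z.val / n : ℝ) : AddCircle (2 * π)) = _
    conv_rhs => rw [← ZMod.natCast_zmod_val z, vertex_natCast]
    congr 1; ring
  · rintro ⟨j, rfl⟩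
    exact ⟨j.val, by rw [vertex_natCast]; congr 1; ring⟩

theorem vertex_mem (z : ZMod n) : vertex n z ∈ Pvert n := by
  rw [← range_vertex]; exact ⟨z, rfl⟩

theorem exists_dist_eq (x y : Pvert n) :
    ∃ z : ZMod n, dist x y = 2 * π * z.valMinAbs.natAbs / n := by
  obtain ⟨z, hz⟩ : (x : AddCircle (2 * π)) ∈ Set.range (vertex n) := by
    rw [range_vertex]; exact x.2
  obtain ⟨w, hw⟩ : (y : AddCircle (2 * π)) ∈ Set.range (vertex n) := by
    rw [range_vertex]; exact y.2
  exact ⟨z - w, by rw [Subtype.dist_eq, dist_eq_norm, ← hz, ← hw, ← map_sub, norm_vertex]⟩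

theorem dist_le_of_odd (hn : Odd n) (x y : Pvert n) : dist x y ≤ π - π / n := by
  obtain ⟨z, hz⟩ := exists_dist_eq x y
  have hhalf : 2 * (z.valMinAbs.natAbs : ℝ) ≤ n - 1 := by
    obtain ⟨k, rfl⟩ := hn
    have : z.valMinAbs.natAbs ≤ k := by have := z.natAbs_valMinAbs_le; omega
    push_cast
    linarith [(Nat.cast_le (α := ℝ)).mpr this]
  have hn0 : (n : ℝ) ≠ 0 := by exact_mod_cast NeZero.ne n
  calc dist x y = π * (2 * z.valMinAbs.natAbs) / n := by rw [hz]; ring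
    _ ≤ π * (n - 1) / n := by gcongr
    _ = π - π / n := by field_simp

theorem two_pi_div_le_dist {x y : Pvert n} (hxy : x ≠ y) : 2 * π / n ≤ dist x y := by
  obtain ⟨z, hz⟩ := exists_dist_eq x y
  have hpos : 0 < dist x y := dist_pos.mpr hxy
  have hz1 : (1 : ℝ) ≤ z.valMinAbs.natAbs := by
    refine Nat.one_le_cast.mpr (Nat.one_le_iff_ne_zero.mpr fun h => ?_)
    simp [hz, h] at hpos
  rw [hz]
  gcongr ?_ / _
  exact le_mul_of_one_le_right two_pi_pos.le hz1

theorem dist_vertex_add (z k : ZMod n) : dist (vertex n (z + k)) (vertex n z) = ‖vertex n k‖ := by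
  rw [dist_eq_norm, map_add, add_sub_cancel_left]

theorem norm_vertex_of_two_mul_add_one {k : ℕ} (hk : n = 2 * k + 1) :
    ‖vertex n k‖ = π - π / n := by
  have hval : (k : ZMod n).val = k := ZMod.val_natCast_of_lt (by omega)
  rw [norm_vertex, ZMod.valMinAbs_natAbs_eq_min, hval, min_eq_left (by omega)]
  have hn0 : (n : ℝ) ≠ 0 := by exact_mod_cast NeZero.ne n
  have hkR : (k : ℝ) = (n - 1) / 2 := by rw [hk]; push_cast; ring
  rw [hkR]
  field_simp

open GromovHausdorff

theorem ghDist_two_le (hn : 2 ≤ n) (hodd : Odd n) :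
    ghDist (Pvert 2) (Pvert n) ≤ (π - π / n) / 2 := by
  let f : Pvert n → Pvert 2 := fun x =>
    ⟨if (x : AddCircle (2 * π)) = 0 then 0 else π, by rw [Pvert_two]; split_ifs <;> simp⟩
  have hf : ∀ x, ((f x : AddCircle (2 * π)) = 0 ↔ (x : AddCircle (2 * π)) = 0) := fun x => by
    simp only [f]
    split_ifs with h
    · exact iff_of_true rfl h
    · exact iff_of_false coe_pi_ne_zero h
  rw [ghDist, dist_comm, ← ghDist]
  refine ghDist_le_of_surjective (f := f) (fun y => ?_) (fun x x' => ?_)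
  · have : Fact (1 < n) := ⟨hn⟩
    by_cases hy : (y : AddCircle (2 * π)) = 0
    · exact ⟨⟨vertex n 0, vertex_mem 0⟩, eq_of_coe_eq_zero_iff (by simp [hf, hy])⟩
    · refine ⟨⟨vertex n 1, vertex_mem 1⟩, eq_of_coe_eq_zero_iff ?_⟩
      simp [hf, hy, vertex_eq_zero_iff]
  · have hdiam := dist_le_of_odd hodd x x'
    by_cases hxx : ((x : AddCircle (2 * π)) = 0 ↔ (x' : AddCircle (2 * π)) = 0)
    · rw [eq_of_coe_eq_zero_iff ((hf x).trans (hxx.trans (hf x').symm)), dist_self, zero_sub,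
        abs_neg, abs_of_nonneg dist_nonneg]
      exact hdiam
    · have hsep := two_pi_div_le_dist fun h : x = x' => hxx (h ▸ Iff.rfl)
      rw [dist_eq_pi_of_ne fun h => hxx (by rw [← hf x, ← hf x', h]), abs_le]
      have : 0 < π / n := by positivity
      rw [mul_div_assoc] at hsep
      constructor <;> linarith

theorem le_ghDist_two (hodd : Odd n) : (π - π / n) / 2 ≤ ghDist (Pvert 2) (Pvert n) := by
  obtain ⟨f, hf⟩ := exists_abs_dist_sub_le_two_mul_ghDist (X := Pvert 2) (Y := Pvert n)
  obtain ⟨k, hk⟩ := hodd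
  let p : ZMod n → Pvert n := fun z => ⟨vertex n z, vertex_mem z⟩
  obtain ⟨z, hz⟩ := Fintype.exists_apply_perm_eq_of_odd_card (by rw [ZMod.card]; exact ⟨k, hk⟩)
    (Equiv.addRight (k : ZMod n)) fun z => decide ((f (p z) : AddCircle (2 * π)) = 0)
  have hsame : f (p (z + k)) = f (p z) := eq_of_coe_eq_zero_iff (decide_eq_decide.mp hz)
  have hfar : dist (p (z + k)) (p z) = π - π / n :=
    (dist_vertex_add z k).trans (norm_vertex_of_two_mul_add_one hk)
  have := hf (p (z + k)) (p z)
  rw [hsame, dist_self, zero_sub, abs_neg, hfar] at this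
  linarith [le_abs_self (π - π / n)]

end Pvert

theorem stmt7 (m : ℕ) (hm : 3 ≤ m) (hodd : Odd m) :
    haveI : NeZero m := ⟨by omega⟩
    GromovHausdorff.ghDist (Pvert 2) (Pvert m) = π / 2 - π / (2 * m) := by
  have : NeZero m := ⟨by omega⟩
  rw [show π / 2 - π / (2 * m) = (π - π / m) / 2 by ring]
  exact le_antisymm (Pvert.ghDist_two_le (by omega) hodd) (Pvert.le_ghDist_two hodd)
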